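/- arXiv:1009.5298 — 2 statements merged into one kernel-verified Lean document; each statement's English description precedes it below -/
import Mathlib

section
/- For non-negative integers p, i ≥ 0 define the symmetric polynomial F_{p,i}(x_1,x_2) = ((x_1^{p+1} − x_2^{p+1})/(x_1 − x_2)) · (x_1 − x_2)^{2i} ∈ ℂ[x_1,x_2]. Then the family {F_{p,i} : p, i ≥ 0} is a ℂ-vector-space basis of the ring ℂ[x_1,x_2]^{𝔖_2} of symmetric polynomials in two variables, i.e. ℂ[x_1,x_2]^{𝔖_2} = ⊕_{p,i ≥ 0} ℂ·F_{p,i}. -/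
open MvPolynomial

noncomputable section

/-- `F_{p,i} = (x_1^{p+1} - x_2^{p+1})/(x_1 - x_2) · (x_1 - x_2)^{2i}
  = (∑_{k=0}^p x_1^k x_2^{p-k}) · (x_1 - x_2)^{2i}`. -/
def Fpi (p i : ℕ) : MvPolynomial (Fin 2) ℂ :=
  (∑ k ∈ Finset.range (p+1), X 0 ^ k * X 1 ^ (p - k)) * (X 0 - X 1) ^ (2 * i)

/-- The submodule of symmetric polynomials in two variables. -/
def SymTwo : Submodule ℂ (MvPolynomial (Fin 2) ℂ) where
  carrier := {f | rename (Equiv.swap (0 : Fin 2) 1) f = f}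
  add_mem' := by intro a b ha hb; simp_all
  zero_mem' := by simp
  smul_mem' := by intro c f hf; simp_all

namespace FpiAux

abbrev R2 := MvPolynomial (Fin 2) ℂ

/-- substitution `x₁ ↦ u + v`, `x₂ ↦ u - v`. -/
def sg : R2 →ₐ[ℂ] R2 := aeval ![X 0 + X 1, X 0 - X 1]

/-- inverse substitution. -/
def tg : R2 →ₐ[ℂ] R2 := aeval ![(1/2 : ℂ) • (X 0 + X 1), (1/2 : ℂ) • (X 0 - X 1)]

/-- negation of the second variable. -/
def ng : R2 →ₐ[ℂ] R2 := aeval ![X 0, -X 1]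

/-- `Q p = ∑_{k≤p} (u+v)^k (u-v)^{p-k}`. -/
def Q (p : ℕ) : R2 := ∑ k ∈ Finset.range (p+1), (X 0 + X 1) ^ k * (X 0 - X 1) ^ (p - k)

/-- `P p i = Q p * (2v)^{2i}`, the image of `Fpi p i` under `sg`. -/
def P (p i : ℕ) : R2 := Q p * (C (2:ℂ) * X 1) ^ (2 * i)

lemma tg_sg (f : R2) : tg (sg f) = f := by
  have h : tg.comp sg = AlgHom.id ℂ R2 := by
    apply MvPolynomial.algHom_ext
    intro i
    fin_cases i <;>
      simp [sg, tg] <;> module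
  calc tg (sg f) = (tg.comp sg) f := rfl
    _ = f := by rw [h]; rfl

lemma sg_injective : Function.Injective sg :=
  Function.LeftInverse.injective tg_sg

lemma monomial_eq_two (d : Fin 2 →₀ ℕ) (c : ℂ) :
    (monomial d c : R2) = C c * X 0 ^ (d 0) * X 1 ^ (d 1) := by
  rw [monomial_eq, Finsupp.prod_fintype _ _ (fun i => pow_zero _), Fin.prod_univ_two, mul_assoc]

lemma ng_monomial (d : Fin 2 →₀ ℕ) (c : ℂ) :
    ng (monomial d c) = ((-1:ℂ) ^ (d 1)) • (monomial d c : R2) := by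
  rw [monomial_eq_two]
  simp only [ng, map_mul, map_pow, aeval_C, aeval_X, Matrix.cons_val_zero, Matrix.cons_val_one,
    Matrix.head_cons]
  rw [neg_pow (X 1 : R2) (d 1), smul_eq_C_mul, map_pow, map_neg, C_1, algebraMap_eq]
  ring

lemma coeff_ng (d : Fin 2 →₀ ℕ) (f : R2) :
    coeff d (ng f) = (-1:ℂ) ^ (d 1) * coeff d f := by
  induction f using MvPolynomial.induction_on' with
  | monomial d' c =>
    rw [ng_monomial, coeff_smul]
    rcases eq_or_ne d' d with rfl | hne
    · simp [smul_eq_mul]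
    · rw [coeff_monomial, if_neg (by exact fun h => hne h)]
      simp
  | add p q hp hq =>
    rw [map_add, coeff_add, hp, hq, coeff_add]
    ring

lemma ng_sg (f : R2) : ng (sg f) = sg (rename (Equiv.swap (0 : Fin 2) 1) f) := by
  have h : ng.comp sg = sg.comp ((rename (Equiv.swap (0 : Fin 2) 1)) : R2 →ₐ[ℂ] R2) := by
    apply MvPolynomial.algHom_ext
    intro i
    fin_cases i <;>
      simp [sg, ng, Equiv.swap_apply_left, Equiv.swap_apply_right] <;> ring
  calc ng (sg f) = (ng.comp sg) f := rfl
    _ = (sg.comp ((rename (Equiv.swap (0 : Fin 2) 1)) : R2 →ₐ[ℂ] R2)) f := by rw [h]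
    _ = _ := rfl

/-- for symmetric `f`, the support of `sg f` has even `v`-exponents. -/
lemma even_of_symm {f : R2} (hf : rename (Equiv.swap (0 : Fin 2) 1) f = f)
    {d : Fin 2 →₀ ℕ} (hd : coeff d (sg f) ≠ 0) : Even (d 1) := by
  have h := coeff_ng d (sg f)
  rw [ng_sg, hf] at h
  by_contra hodd
  rw [Nat.not_even_iff_odd] at hodd
  rw [hodd.neg_one_pow, neg_one_mul] at h
  exact hd (by linear_combination (h : coeff d (sg f) = -coeff d (sg f)) / 2)

lemma Fpi_mem (p i : ℕ) : Fpi p i ∈ SymTwo := by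
  show rename (Equiv.swap (0 : Fin 2) 1) (Fpi p i) = Fpi p i
  unfold Fpi
  rw [map_mul, map_pow, map_sub, map_sum]
  simp only [map_mul, map_pow, rename_X, Equiv.swap_apply_left, Equiv.swap_apply_right]
  congr 1
  · rw [← Finset.sum_range_reflect]
    apply Finset.sum_congr rfl
    intro k hk
    rw [Finset.mem_range] at hk
    have h1 : p + 1 - 1 - k = p - k := by omega
    have h2 : p - (p - k) = k := by omega
    rw [h1, h2, mul_comm]
  · rw [show (X 1 - X 0 : R2) = -(X 0 - X 1) by ring]
    exact (Even.neg_pow ⟨i, by ring⟩ _)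

lemma sg_Fpi (p i : ℕ) : sg (Fpi p i) = P p i := by
  unfold Fpi P Q
  rw [map_mul, map_pow, map_sub, map_sum]
  simp only [map_mul, map_pow, sg, aeval_X, Matrix.cons_val_zero, Matrix.cons_val_one,
    Matrix.head_cons]
  congr 1
  rw [map_ofNat C 2]
  ring

lemma Q_homog (p : ℕ) : (Q p).IsHomogeneous p := by
  apply IsHomogeneous.sum
  intro k hk
  rw [Finset.mem_range] at hk
  have h := (((isHomogeneous_X ℂ (0 : Fin 2)).add (isHomogeneous_X ℂ 1)).pow k).mul
    (((isHomogeneous_X ℂ (0 : Fin 2)).sub (isHomogeneous_X ℂ 1)).pow (p - k))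
  rwa [show 1 * k + 1 * (p - k) = p by omega] at h

lemma P_homog (p i : ℕ) : (P p i).IsHomogeneous (p + 2 * i) := by
  have h2 := (isHomogeneous_C_mul_X (2:ℂ) (1 : Fin 2)).pow (2 * i)
  rw [one_mul] at h2
  exact (Q_homog p).mul h2

lemma degree_two (d : Fin 2 →₀ ℕ) : d.degree = d 0 + d 1 := by
  rw [Finsupp.degree_apply, Finset.sum_subset (Finset.subset_univ _)
    (fun i _ hi => by simpa using Finsupp.notMem_support_iff.mp hi), Fin.sum_univ_two]

/-- coefficient of `P p i` via `coeff_mul_monomial'`. -/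
lemma coeff_P (d : Fin 2 →₀ ℕ) (p i : ℕ) :
    coeff d (P p i) = if Finsupp.single 1 (2 * i) ≤ d then
      coeff (d - Finsupp.single 1 (2 * i)) (Q p) * (2:ℂ) ^ (2 * i) else 0 := by
  have hm : ((C (2:ℂ) * X 1 : R2) ^ (2 * i)) =
      monomial (Finsupp.single 1 (2 * i)) ((2:ℂ) ^ (2 * i)) := by
    rw [mul_pow, ← map_pow, C_mul_X_pow_eq_monomial]
  rw [show P p i = Q p * ((C (2:ℂ) * X 1 : R2) ^ (2 * i)) from rfl, hm, coeff_mul_monomial']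

/-- evaluation `v ↦ 0` preserves coefficients of pure-`u` monomials. -/
lemma coeff_single0 (n : ℕ) (f : R2) :
    coeff (Finsupp.single 0 n) (aeval ![X 0, (0 : R2)] f) = coeff (Finsupp.single 0 n) f := by
  induction f using MvPolynomial.induction_on' with
  | monomial d c =>
    rcases Nat.eq_zero_or_pos (d 1) with hz | hz
    · have hval : aeval ![X 0, (0 : R2)] (monomial d c) = monomial d c := by
        rw [monomial_eq_two, hz, pow_zero, mul_one]
        simp only [map_mul, map_pow, aeval_C, aeval_X, Matrix.cons_val_zero]
        rw [algebraMap_eq]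
      rw [hval]
    · have hval : aeval ![X 0, (0 : R2)] (monomial d c) = 0 := by
        rw [monomial_eq_two]
        simp only [map_mul, map_pow, aeval_C, aeval_X, Matrix.cons_val_zero, Matrix.cons_val_one,
          Matrix.head_cons]
        rw [zero_pow (by omega : d 1 ≠ 0), mul_zero]
      have hne : d ≠ Finsupp.single 0 n := by
        intro h
        have := DFunLike.congr_fun h 1
        simp [Finsupp.single_apply] at this
        omega
      rw [hval, coeff_zero, coeff_monomial, if_neg hne]
  | add f g hf hg => rw [map_add, coeff_add, coeff_add, hf, hg]

lemma coeff_Q_diag (p : ℕ) : coeff (Finsupp.single 0 p) (Q p) = (p + 1 : ℂ) := by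
  have h := coeff_single0 p (Q p)
  have hQ : aeval ![X 0, (0 : R2)] (Q p) = (p + 1 : ℕ) • (X 0 : R2) ^ p := by
    unfold Q
    rw [map_sum]
    have : ∀ k ∈ Finset.range (p+1),
        aeval ![X 0, (0 : R2)] (((X 0 + X 1) ^ k * (X 0 - X 1) ^ (p - k) : R2)) = (X 0 : R2) ^ p := by
      intro k hk
      rw [Finset.mem_range] at hk
      simp only [map_mul, map_pow, map_add, map_sub, aeval_X, Matrix.cons_val_zero,
        Matrix.cons_val_one, Matrix.head_cons, add_zero, sub_zero]
      rw [← pow_add, Nat.add_sub_cancel' (by omega : k ≤ p)]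
    rw [Finset.sum_congr rfl this, Finset.sum_const, Finset.card_range]
  rw [hQ] at h
  rw [← h, X_pow_eq_monomial, coeff_smul, coeff_monomial, if_pos rfl]
  simp

lemma coeff_Q (p n : ℕ) :
    coeff (Finsupp.single 0 n) (Q p) = if n = p then (p + 1 : ℂ) else 0 := by
  split_ifs with h
  · rw [h]; exact coeff_Q_diag p
  · apply (Q_homog p).coeff_eq_zero
    rw [degree_two]
    simp [Finsupp.single_apply, h]

/-- the exponent `u^p v^{2i}`. -/
def D (p i : ℕ) : Fin 2 →₀ ℕ := Finsupp.single 0 p + Finsupp.single 1 (2 * i)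

lemma D_apply0 (p i : ℕ) : D p i 0 = p := by
  simp [D, Finsupp.single_apply]

lemma D_apply1 (p i : ℕ) : D p i 1 = 2 * i := by
  simp [D, Finsupp.single_apply]

lemma D_sub (p i : ℕ) : D p i - Finsupp.single 1 (2 * i) = Finsupp.single 0 p := by
  ext j
  fin_cases j <;> simp [D, Finsupp.single_apply]

lemma eq_D (d : Fin 2 →₀ ℕ) {p i : ℕ} (h0 : d 0 = p) (h1 : d 1 = 2 * i) : d = D p i := by
  ext j
  fin_cases j <;> simp [D, Finsupp.single_apply, h0, h1]

lemma coeff_P_of_lt (p i p' i' : ℕ) (h : i < i') : coeff (D p i) (P p' i') = 0 := by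
  rw [coeff_P, if_neg]
  rw [Finsupp.single_le_iff, D_apply1]
  omega

lemma coeff_P_of_eq (p i p' : ℕ) :
    coeff (D p i) (P p' i) = if p = p' then ((2:ℂ) ^ (2 * i) * (p + 1)) else 0 := by
  rw [coeff_P, if_pos (by rw [Finsupp.single_le_iff, D_apply1]), D_sub, coeff_Q]
  split_ifs with h
  · rw [h]; ring
  · ring

lemma even_P (a b : ℕ) {d : Fin 2 →₀ ℕ} (hd : coeff d (P a b) ≠ 0) : Even (d 1) := by
  rw [← sg_Fpi] at hd
  exact even_of_symm (Fpi_mem a b) hd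

lemma support_P (a b : ℕ) {d : Fin 2 →₀ ℕ} (hd : coeff d (P a b) ≠ 0) :
    d 0 + d 1 = a + 2 * b ∧ 2 * b ≤ d 1 := by
  constructor
  · by_contra h
    exact hd ((P_homog a b).coeff_eq_zero (by rw [degree_two]; exact h))
  · by_contra h
    apply hd
    rw [coeff_P, if_neg]
    rwa [Finsupp.single_le_iff]

lemma mono_mem (a : ℕ) : ∀ b : ℕ,
    (monomial (D a b) (1:ℂ)) ∈ Submodule.span ℂ (Set.range fun q : ℕ × ℕ => P q.1 q.2) := by
  induction a using Nat.strong_induction_on with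
  | _ a IH =>
    intro b
    have hPmem : P a b ∈ Submodule.span ℂ (Set.range fun q : ℕ × ℕ => P q.1 q.2) :=
      Submodule.subset_span ⟨(a, b), rfl⟩
    set c : ℂ := 2 ^ (2 * b) * (a + 1) with hc
    have hc0 : c ≠ 0 := mul_ne_zero (pow_ne_zero _ two_ne_zero) (Nat.cast_add_one_ne_zero a)
    set R0 : R2 := P a b - c • monomial (D a b) 1 with hR0
    have hRc : ∀ d, coeff d R0 = coeff d (P a b) - (if D a b = d then c else 0) := by
      intro d
      rw [hR0, coeff_sub, coeff_smul, coeff_monomial]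
      split_ifs <;> simp
    have hdiag : coeff (D a b) (P a b) = c := by rw [coeff_P_of_eq, if_pos rfl]
    have hRmem : R0 ∈ Submodule.span ℂ (Set.range fun q : ℕ × ℕ => P q.1 q.2) := by
      rw [R0.as_sum]
      apply Submodule.sum_mem
      intro d hd
      have hcoeff : coeff d R0 ≠ 0 := mem_support_iff.mp hd
      have hdne : d ≠ D a b := by
        rintro rfl
        rw [hRc, hdiag, if_pos rfl, sub_self] at hcoeff
        exact hcoeff rfl
      have hPcoeff : coeff d (P a b) ≠ 0 := by
        rw [hRc, if_neg (fun h => hdne h.symm), sub_zero] at hcoeff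
        exact hcoeff
      obtain ⟨hdeg, hle⟩ := support_P a b hPcoeff
      obtain ⟨b', hb'⟩ := even_P a b hPcoeff
      have hd0 : d 0 < a := by
        rcases lt_or_ge (d 0) a with h | h
        · exact h
        · exfalso
          apply hdne
          have h0 : d 0 = a := by omega
          have h1 : d 1 = 2 * b := by omega
          exact eq_D d h0 h1
      have hdD : d = D (d 0) b' := eq_D d rfl (by omega)
      rw [show monomial d (coeff d R0) = (coeff d R0) • monomial d (1:ℂ) by
        rw [smul_monomial, smul_eq_mul, mul_one], hdD]
      exact Submodule.smul_mem _ _ (IH (d 0) hd0 b')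
    have hfinal : monomial (D a b) (1:ℂ) = c⁻¹ • (P a b - R0) := by
      rw [hR0, sub_sub_cancel, smul_smul, inv_mul_cancel₀ hc0, one_smul]
    rw [hfinal]
    exact Submodule.smul_mem _ _ (Submodule.sub_mem _ hPmem hRmem)

lemma indep : LinearIndependent ℂ (fun q : ℕ × ℕ => Fpi q.1 q.2) := by
  rw [linearIndependent_iff]
  intro l hl
  have hs : (Finsupp.linearCombination ℂ (fun q : ℕ × ℕ => P q.1 q.2)) l = 0 := by
    have h2 : sg ((Finsupp.linearCombination ℂ fun q : ℕ × ℕ => Fpi q.1 q.2) l)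
        = (Finsupp.linearCombination ℂ (fun q : ℕ × ℕ => P q.1 q.2)) l := by
      rw [Finsupp.linearCombination_apply, Finsupp.linearCombination_apply, Finsupp.sum,
        Finsupp.sum, map_sum]
      exact Finset.sum_congr rfl fun q _ => by rw [map_smul, sg_Fpi]
    rw [← h2, hl, map_zero]
  have key : ∀ i p, l (p, i) = 0 := by
    intro i
    induction i using Nat.strong_induction_on with
    | _ i IH =>
      intro p
      have h0 : coeff (D p i)
          ((Finsupp.linearCombination ℂ (fun q : ℕ × ℕ => P q.1 q.2)) l) = 0 := by
        rw [hs, coeff_zero]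
      rw [Finsupp.linearCombination_apply, Finsupp.sum, coeff_sum] at h0
      have h1 : ∑ q ∈ l.support, l q * coeff (D p i) (P q.1 q.2) = 0 := by
        rw [← h0]
        exact Finset.sum_congr rfl fun q _ => by rw [coeff_smul, smul_eq_mul]
      rw [Finset.sum_eq_single (p, i)] at h1
      · rw [coeff_P_of_eq, if_pos rfl] at h1
        have hcne : (2:ℂ) ^ (2 * i) * (p + 1) ≠ 0 :=
          mul_ne_zero (pow_ne_zero _ two_ne_zero) (Nat.cast_add_one_ne_zero p)
        exact (mul_eq_zero.mp h1).resolve_right hcne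
      · rintro ⟨p', i'⟩ hq hne
        rcases lt_trichotomy i' i with h | h | h
        · rw [IH i' h p', zero_mul]
        · subst h
          rw [coeff_P_of_eq, if_neg (fun hpe => hne (by rw [hpe])), mul_zero]
        · rw [coeff_P_of_lt p i p' i' h, mul_zero]
      · intro h
        rw [Finsupp.notMem_support_iff.mp h, zero_mul]
  ext q
  obtain ⟨p, i⟩ := q
  simpa using key i p

lemma span_sym {f : R2} (hf : f ∈ SymTwo) :
    f ∈ Submodule.span ℂ (Set.range fun q : ℕ × ℕ => Fpi q.1 q.2) := by
  have hf' : rename (Equiv.swap (0 : Fin 2) 1) f = f := hf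
  have hsgf : sg f ∈ Submodule.span ℂ (Set.range fun q : ℕ × ℕ => P q.1 q.2) := by
    rw [(sg f).as_sum]
    apply Submodule.sum_mem
    intro d hd
    have hc : coeff d (sg f) ≠ 0 := mem_support_iff.mp hd
    obtain ⟨b', hb'⟩ := even_of_symm hf' hc
    have hdD : d = D (d 0) b' := eq_D d rfl (by omega)
    rw [show monomial d (coeff d (sg f)) = (coeff d (sg f)) • monomial d (1:ℂ) by
      rw [smul_monomial, smul_eq_mul, mul_one], hdD]
    exact Submodule.smul_mem _ _ (mono_mem (d 0) b')
  have hcomp : (fun q : ℕ × ℕ => P q.1 q.2)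
      = sg.toLinearMap ∘ (fun q : ℕ × ℕ => Fpi q.1 q.2) :=
    funext fun q => (sg_Fpi q.1 q.2).symm
  rw [hcomp, Set.range_comp, ← Submodule.map_span] at hsgf
  obtain ⟨g, hg, hgf⟩ := Submodule.mem_map.mp hsgf
  have : g = f := sg_injective hgf
  rwa [← this]

end FpiAux

/-- The family `{F_{p,i} : p, i ≥ 0}` is a `ℂ`-basis of the space
`ℂ[x_1, x_2]^{𝔖_2}` of symmetric polynomials in two variables. -/
theorem Fpi_basis_of_symmetric :
    ∃ b : Module.Basis (ℕ × ℕ) ℂ SymTwo,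
      ∀ q : ℕ × ℕ, (b q : MvPolynomial (Fin 2) ℂ) = Fpi q.1 q.2 := by
  have hmem : ∀ q : ℕ × ℕ, Fpi q.1 q.2 ∈ SymTwo := fun q => FpiAux.Fpi_mem q.1 q.2
  set v : ℕ × ℕ → SymTwo := fun q => ⟨Fpi q.1 q.2, hmem q⟩ with hv
  have hli : LinearIndependent ℂ v := by
    apply LinearIndependent.of_comp SymTwo.subtype
    exact FpiAux.indep
  have hsp : ⊤ ≤ Submodule.span ℂ (Set.range v) := by
    rintro ⟨f, hf⟩ -
    have h1 : f ∈ Submodule.span ℂ (Set.range fun q : ℕ × ℕ => Fpi q.1 q.2) :=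
      FpiAux.span_sym hf
    have h2 : Set.range (fun q : ℕ × ℕ => Fpi q.1 q.2)
        = SymTwo.subtype '' Set.range v := by
      rw [← Set.range_comp]; rfl
    rw [h2, ← Submodule.map_span] at h1
    obtain ⟨y, hy, hyx⟩ := Submodule.mem_map.mp h1
    have : y = ⟨f, hf⟩ := Subtype.ext hyx
    rwa [← this]
  refine ⟨Module.Basis.mk hli hsp, fun q => ?_⟩
  rw [Module.Basis.mk_apply]
end
end

section
/- Let n ≥ 2, S = ℂ[x_1,…,x_n], and let 𝔖_2 × 𝔖_{n−2} ⊂ 𝔖_n be the subgroup whose factors permute {x_1, x_2} and {x_3,…,x_n} respectively. For non-negative integers p, i define F_{p,i}(x_1,x_2) = ((x_1^{p+1} − x_2^{p+1})/(x_1 − x_2)) · (x_1 − x_2)^{2i}. Then S^{𝔖_2 × 𝔖_{n−2}} = Σ_{p,i ≥ 0} S^{𝔖_n} · F_{p,i}, i.e. every 𝔖_2 × 𝔖_{n−2}-invariant polynomial is an S^{𝔖_n}-linear combination of the polynomials F_{p,i}. -/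
open MvPolynomial Finset

noncomputable section

lemma sum_range_two_mul {A : Type*} [AddCommMonoid A] (f : ℕ → A) (m : ℕ) :
    ∑ t ∈ Finset.range (2*m), f t = ∑ j ∈ Finset.range m, (f (2*j) + f (2*j+1)) := by
  induction m with
  | zero => simp
  | succ m ih =>
    have h : 2*(m+1) = (2*m+1)+1 := by ring
    rw [h, Finset.sum_range_succ, Finset.sum_range_succ, ih, Finset.sum_range_succ]
    abel

lemma two_pow_sub {A : Type*} [CommRing A] (u v : A) (p : ℕ) :
    (u+v)^(p+1) - (u-v)^(p+1)
      = 2 * ∑ j ∈ Finset.range (p+1),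
          ((p+1).choose (2*j+1) : A) * (u^(p-2*j) * v^(2*j+1)) := by
  have e1 : (u+v)^(p+1) = ∑ k ∈ Finset.range (p+2), v^k * u^(p+1-k) * ((p+1).choose k : A) := by
    rw [add_comm u v, add_pow]
  have e2 : (u-v)^(p+1) = ∑ k ∈ Finset.range (p+2), (-v)^k * u^(p+1-k) * ((p+1).choose k : A) := by
    rw [sub_eq_add_neg, add_comm u (-v), add_pow]
  rw [e1, e2, ← Finset.sum_sub_distrib]
  have pad : ∑ k ∈ Finset.range (p+2), (v^k * u^(p+1-k) * ((p+1).choose k : A)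
        - (-v)^k * u^(p+1-k) * ((p+1).choose k : A))
      = ∑ k ∈ Finset.range (2*(p+1)), (v^k * u^(p+1-k) * ((p+1).choose k : A)
        - (-v)^k * u^(p+1-k) * ((p+1).choose k : A)) := by
    apply Finset.sum_subset
    · apply Finset.range_subset_range.2; omega
    · intro k hk2 hk
      have hlt : p + 1 < k := by simp only [Finset.mem_range] at hk ⊢; omega
      have : (p+1).choose k = 0 := Nat.choose_eq_zero_of_lt hlt
      simp [this]
  rw [pad, sum_range_two_mul, Finset.mul_sum]
  apply Finset.sum_congr rfl
  intro j _
  have hev : (-v)^(2*j) = v^(2*j) := (even_two_mul j).neg_pow v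
  have hod : (-v)^(2*j+1) = -(v^(2*j+1)) := Odd.neg_pow ⟨j, by ring⟩ v
  rw [hev, hod, Nat.succ_sub_succ]
  ring
def FpiN (n : ℕ) (hn : 2 ≤ n) (p i : ℕ) : MvPolynomial (Fin n) ℂ :=
  (∑ k ∈ Finset.range (p+1),
      X (⟨0, by omega⟩ : Fin n) ^ k * X (⟨1, by omega⟩ : Fin n) ^ (p - k)) *
    (X (⟨0, by omega⟩ : Fin n) - X (⟨1, by omega⟩ : Fin n)) ^ (2 * i)

namespace FpiAux

variable (n : ℕ) (hn : 2 ≤ n)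

def i0 : Fin n := ⟨0, by omega⟩
def i1 : Fin n := ⟨1, by omega⟩

def Zp : MvPolynomial (Fin n) ℂ := X (i0 n hn) + X (i1 n hn)
def Wp : MvPolynomial (Fin n) ℂ := X (i0 n hn) - X (i1 n hn)
def Qp : MvPolynomial (Fin n) ℂ := X (i0 n hn) * X (i1 n hn)
def hP (p : ℕ) : MvPolynomial (Fin n) ℂ :=
  ∑ k ∈ Finset.range (p+1), X (i0 n hn) ^ k * X (i1 n hn) ^ (p - k)

lemma FpiN_eq (p i : ℕ) : FpiN n hn p i = hP n hn p * (Wp n hn) ^ (2*i) := rfl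

lemma i0_ne_i1 : i0 n hn ≠ i1 n hn := by
  simp [i0, i1, Fin.ext_iff]

lemma Wp_ne_zero : Wp n hn ≠ 0 := by
  rw [Wp, sub_ne_zero]
  exact fun h => i0_ne_i1 n hn (MvPolynomial.X_injective h)

lemma hP_mul_W (p : ℕ) :
    hP n hn p * Wp n hn = X (i0 n hn) ^ (p+1) - X (i1 n hn) ^ (p+1) := by
  have := geom_sum₂_mul (X (i0 n hn) : MvPolynomial (Fin n) ℂ) (X (i1 n hn)) (p+1)
  simpa [hP, Wp] using this

lemma hP_zero : hP n hn 0 = 1 := by simp [hP]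

lemma hP_one : hP n hn 1 = Zp n hn := by
  simp [hP, Finset.sum_range_succ, Zp, add_comm]

lemma hP_rec (p : ℕ) :
    hP n hn (p+2) = Zp n hn * hP n hn (p+1) - Qp n hn * hP n hn p := by
  apply mul_right_cancel₀ (Wp_ne_zero n hn)
  rw [sub_mul, mul_assoc, mul_assoc, hP_mul_W, hP_mul_W, hP_mul_W, Zp, Qp]
  ring


lemma key (p : ℕ) : (2 : MvPolynomial (Fin n) ℂ)^p * hP n hn p
    = ∑ j ∈ Finset.range (p+1),
        (((p+1).choose (2*j+1) : MvPolynomial (Fin n) ℂ)) * (Zp n hn ^ (p - 2*j) * Wp n hn ^ (2*j)) := by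
  set R := MvPolynomial (Fin n) ℂ
  apply mul_right_cancel₀ (Wp_ne_zero n hn)
  apply mul_left_cancel₀ (two_ne_zero (α := R))
  have h1 : Zp n hn + Wp n hn = 2 * X (i0 n hn) := by rw [Zp, Wp]; ring
  have h2 : Zp n hn - Wp n hn = 2 * X (i1 n hn) := by rw [Zp, Wp]; ring
  have ts := two_pow_sub (Zp n hn) (Wp n hn) p
  rw [h1, h2, mul_pow, mul_pow] at ts
  calc (2:R) * (2^p * hP n hn p * Wp n hn)
      = 2^(p+1) * (hP n hn p * Wp n hn) := by ring
    _ = 2^(p+1) * (X (i0 n hn) ^ (p+1) - X (i1 n hn) ^ (p+1)) := by rw [hP_mul_W]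
    _ = (2:R)^(p+1) * X (i0 n hn) ^ (p+1) - 2^(p+1) * X (i1 n hn) ^ (p+1) := by ring
    _ = 2 * ∑ j ∈ Finset.range (p+1),
          ((p+1).choose (2*j+1) : R) * (Zp n hn ^ (p-2*j) * Wp n hn ^ (2*j+1)) := ts
    _ = 2 * ((∑ j ∈ Finset.range (p+1),
          ((p+1).choose (2*j+1) : R) * (Zp n hn ^ (p-2*j) * Wp n hn ^ (2*j))) * Wp n hn) := by
        rw [Finset.sum_mul]
        congr 1
        apply Finset.sum_congr rfl
        intro j _
        rw [pow_succ]
        ring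

def Vzw : Submodule ℂ (MvPolynomial (Fin n) ℂ) :=
  Submodule.span ℂ {g | ∃ a b : ℕ, g = Zp n hn ^ a * Wp n hn ^ (2*b)}

def VF : Submodule ℂ (MvPolynomial (Fin n) ℂ) :=
  Submodule.span ℂ (Set.range fun pq : ℕ × ℕ => FpiN n hn pq.1 pq.2)

lemma ZW_mem_Vzw (a b : ℕ) : Zp n hn ^ a * Wp n hn ^ (2*b) ∈ Vzw n hn :=
  Submodule.subset_span ⟨a, b, rfl⟩

lemma Vzw_mul {x y : MvPolynomial (Fin n) ℂ} (hx : x ∈ Vzw n hn) (hy : y ∈ Vzw n hn) :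
    x * y ∈ Vzw n hn := by
  induction hx using Submodule.span_induction with
  | mem g hg =>
    obtain ⟨a, b, rfl⟩ := hg
    induction hy using Submodule.span_induction with
    | mem g' hg' =>
      obtain ⟨a', b', rfl⟩ := hg'
      have : Zp n hn ^ a * Wp n hn ^ (2*b) * (Zp n hn ^ a' * Wp n hn ^ (2*b'))
          = Zp n hn ^ (a+a') * Wp n hn ^ (2*(b+b')) := by
        rw [pow_add, Nat.mul_add, pow_add]; ring
      rw [this]; exact ZW_mem_Vzw n hn _ _
    | zero => rw [mul_zero]; exact Submodule.zero_mem _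
    | add u v _ _ hu hv => rw [mul_add]; exact Submodule.add_mem _ hu hv
    | smul c u _ hu => rw [mul_smul_comm]; exact Submodule.smul_mem _ c hu
  | zero => rw [zero_mul]; exact Submodule.zero_mem _
  | add u v _ _ hu hv => rw [add_mul]; exact Submodule.add_mem _ hu hv
  | smul c u _ hu => rw [smul_mul_assoc]; exact Submodule.smul_mem _ c hu

lemma one_mem_Vzw : (1 : MvPolynomial (Fin n) ℂ) ∈ Vzw n hn := by
  have := ZW_mem_Vzw n hn 0 0; simpa using this

lemma Z_mem_Vzw : Zp n hn ∈ Vzw n hn := by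
  have := ZW_mem_Vzw n hn 1 0; simpa using this

lemma Wsq_mem_Vzw : Wp n hn ^ 2 ∈ Vzw n hn := by
  have := ZW_mem_Vzw n hn 0 1; simpa using this

lemma Q_mem_Vzw : Qp n hn ∈ Vzw n hn := by
  have h4 : (4:ℂ) • Qp n hn = Zp n hn ^ 2 - Wp n hn ^ 2 := by
    rw [MvPolynomial.smul_eq_C_mul, map_ofNat, Zp, Wp, Qp]; ring
  have hQ : Qp n hn = (4⁻¹:ℂ) • (Zp n hn ^ 2 - Wp n hn ^ 2) := by
    rw [← h4, smul_smul]; norm_num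
  rw [hQ]
  refine Submodule.smul_mem _ _ (Submodule.sub_mem _ ?_ (Wsq_mem_Vzw n hn))
  simpa using ZW_mem_Vzw n hn 2 0

lemma pow_mem_Vzw {x : MvPolynomial (Fin n) ℂ} (hx : x ∈ Vzw n hn) (k : ℕ) :
    x ^ k ∈ Vzw n hn := by
  induction k with
  | zero => simpa using one_mem_Vzw n hn
  | succ k ih => rw [pow_succ]; exact Vzw_mul n hn ih hx

lemma hP_mem_Vzw (p : ℕ) : hP n hn p ∈ Vzw n hn := by
  induction p using Nat.strong_induction_on with
  | _ p ih =>
    match p with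
    | 0 => rw [hP_zero]; exact one_mem_Vzw n hn
    | 1 => rw [hP_one]; exact Z_mem_Vzw n hn
    | (p+2) =>
      rw [hP_rec]
      exact Submodule.sub_mem _
        (Vzw_mul n hn (Z_mem_Vzw n hn) (ih (p+1) (by omega)))
        (Vzw_mul n hn (Q_mem_Vzw n hn) (ih p (by omega)))

lemma FpiN_mem_Vzw (p i : ℕ) : FpiN n hn p i ∈ Vzw n hn := by
  rw [FpiN_eq, pow_mul]
  exact Vzw_mul n hn (hP_mem_Vzw n hn p) (pow_mem_Vzw n hn (Wsq_mem_Vzw n hn) i)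

lemma FpiN_mem_VF (p i : ℕ) : FpiN n hn p i ∈ VF n hn :=
  Submodule.subset_span ⟨(p, i), rfl⟩

lemma Zpow_mem_VF (a : ℕ) : ∀ b : ℕ, Zp n hn ^ a * Wp n hn ^ (2*b) ∈ VF n hn := by
  induction a using Nat.strong_induction_on with
  | _ a ih =>
    intro b
    set R := MvPolynomial (Fin n) ℂ
    set v : R := Zp n hn ^ a * Wp n hn ^ (2*b) with hv
    have hmul := congrArg (· * Wp n hn ^ (2*b)) (key n hn a)
    simp only [Finset.sum_mul] at hmul
    rw [Finset.sum_range_succ'] at hmul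
    have h0 : ((a+1).choose (2*0+1) : R) * (Zp n hn ^ (a-2*0) * Wp n hn ^ (2*0)) * Wp n hn ^ (2*b)
        = ((a+1 : ℕ) : R) * v := by
      simp only [hv]
      norm_num [Nat.choose_one_right]
      ring
    rw [h0] at hmul
    have hsub : ((a+1 : ℕ) : R) * v
        = (2:R)^a * FpiN n hn a b
          - ∑ j ∈ Finset.range a, ((a+1).choose (2*(j+1)+1) : R)
              * (Zp n hn ^ (a-2*(j+1)) * Wp n hn ^ (2*(j+1))) * Wp n hn ^ (2*b) := by
      rw [FpiN_eq]
      conv_rhs => rw [← mul_assoc]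
      rw [add_comm] at hmul
      exact eq_sub_of_add_eq hmul.symm
    have hmem : ((a+1 : ℕ) : R) * v ∈ VF n hn := by
      rw [hsub]
      apply Submodule.sub_mem
      · have h2 : (2:R)^a * FpiN n hn a b = (2^a : ℕ) • FpiN n hn a b := by
          rw [nsmul_eq_mul]; push_cast; ring
        rw [h2]
        exact nsmul_mem (FpiN_mem_VF n hn a b) _
      · apply Submodule.sum_mem
        intro j hj
        rcases le_or_gt (2*(j+1)) a with hle | hlt
        · have heq : ((a+1).choose (2*(j+1)+1) : R)
              * (Zp n hn ^ (a-2*(j+1)) * Wp n hn ^ (2*(j+1))) * Wp n hn ^ (2*b)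
              = ((a+1).choose (2*(j+1)+1) : ℕ)
                • (Zp n hn ^ (a-2*(j+1)) * Wp n hn ^ (2*((j+1)+b))) := by
            rw [nsmul_eq_mul, show 2*((j+1)+b) = 2*(j+1)+2*b by ring, pow_add]
            ring
          rw [heq]
          exact nsmul_mem (ih (a-2*(j+1)) (by omega) ((j+1)+b)) _
        · have hz : (a+1).choose (2*(j+1)+1) = 0 := Nat.choose_eq_zero_of_lt (by omega)
          rw [hz]
          simp
    have hfin : v = (((a+1:ℕ) : ℂ))⁻¹ • (((a+1 : ℕ) : R) * v) := by
      have hc : ((a+1 : ℕ) : R) * v = ((a+1:ℕ) : ℂ) • v := by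
        rw [MvPolynomial.smul_eq_C_mul, map_natCast]
      rw [hc, smul_smul, inv_mul_cancel₀ (by exact_mod_cast Nat.succ_ne_zero a), one_smul]
    rw [hfin]
    exact Submodule.smul_mem _ _ hmem

lemma Vzw_le_VF : Vzw n hn ≤ VF n hn := by
  rw [Vzw, Submodule.span_le]
  rintro g ⟨a, b, rfl⟩
  exact Zpow_mem_VF n hn a b

lemma VF_le_Vzw : VF n hn ≤ Vzw n hn := by
  rw [VF, Submodule.span_le]
  rintro g ⟨⟨p, i⟩, rfl⟩
  exact FpiN_mem_Vzw n hn p i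

def emb : Fin (n-2) ↪ Fin n :=
  ⟨fun j => ⟨2 + (j : ℕ), by omega⟩, by
    intro a b hab
    have : 2 + (a:ℕ) = 2 + (b:ℕ) := congrArg Fin.val hab
    exact Fin.ext (by omega)⟩

def restS : Finset (Fin n) := Finset.univ.map (emb n hn)

lemma i0_notin_restS : i0 n hn ∉ restS n hn := by
  rw [restS, Finset.mem_map]
  rintro ⟨j, -, hj⟩
  have := congrArg Fin.val hj
  change 2 + (j:ℕ) = 0 at this
  omega

lemma i1_notin_restS : i1 n hn ∉ restS n hn := by
  rw [restS, Finset.mem_map]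
  rintro ⟨j, -, hj⟩
  have := congrArg Fin.val hj
  change 2 + (j:ℕ) = 1 at this
  omega

lemma univ_eq : (Finset.univ : Finset (Fin n))
    = insert (i0 n hn) (insert (i1 n hn) (restS n hn)) := by
  symm
  rw [Finset.eq_univ_iff_forall]
  intro i
  rcases lt_or_ge (i : ℕ) 2 with hi | hi
  · have hi2 : (i:ℕ) = 0 ∨ (i:ℕ) = 1 := by omega
    rcases hi2 with h0 | h1
    · exact Finset.mem_insert.2 (Or.inl (Fin.ext h0))
    · exact Finset.mem_insert.2 (Or.inr (Finset.mem_insert.2 (Or.inl (Fin.ext h1))))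
  · refine Finset.mem_insert.2 (Or.inr (Finset.mem_insert.2 (Or.inr ?_)))
    rw [restS, Finset.mem_map]
    exact ⟨⟨(i:ℕ) - 2, by omega⟩, Finset.mem_univ _, Fin.ext (by show 2 + ((i:ℕ) - 2) = (i:ℕ); omega)⟩

def es (s : Finset (Fin n)) (k : ℕ) : MvPolynomial (Fin n) ℂ :=
  ∑ A ∈ Finset.powersetCard k s, ∏ j ∈ A, X j

lemma es_zero (s : Finset (Fin n)) : es n s 0 = 1 := by simp [es]

lemma es_insert {a : Fin n} {s : Finset (Fin n)} (ha : a ∉ s) (k : ℕ) :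
    es n (insert a s) (k+1) = es n s (k+1) + X a * es n s k := by
  rw [es, Finset.powersetCard_succ_insert ha, Finset.sum_union]
  · congr 1
    rw [Finset.sum_image, es, Finset.mul_sum]
    · apply Finset.sum_congr rfl
      intro A hA
      have haA : a ∉ A := fun h => ha ((Finset.mem_powersetCard.1 hA).1 h)
      rw [Finset.prod_insert haA]
    · intro A hA B hB hAB
      have haA : a ∉ A := fun h => ha ((Finset.mem_powersetCard.1 hA).1 h)
      have haB : a ∉ B := fun h => ha ((Finset.mem_powersetCard.1 hB).1 h)
      have := congrArg (Finset.erase · a) hAB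
      simpa [Finset.erase_insert haA, Finset.erase_insert haB] using this
  · rw [Finset.disjoint_left]
    intro A hA hA'
    obtain ⟨B, hB, rfl⟩ := Finset.mem_image.1 hA'
    exact ha ((Finset.mem_powersetCard.1 hA).1 (Finset.mem_insert_self a B))

lemma esymm_eq_es (k : ℕ) : MvPolynomial.esymm (Fin n) ℂ k = es n Finset.univ k := rfl

lemma rename_esymm_eq_es (k : ℕ) :
    rename (emb n hn) (MvPolynomial.esymm (Fin (n-2)) ℂ k) = es n (restS n hn) k := by
  rw [MvPolynomial.esymm, map_sum, es, restS, Finset.powersetCard_map, Finset.sum_map]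
  apply Finset.sum_congr rfl
  intro t _
  rw [map_prod, show ((Finset.mapEmbedding (emb n hn)).toEmbedding t : Finset (Fin n))
      = t.map (emb n hn) from rfl, Finset.prod_map]
  simp

lemma esymm_one_eq :
    MvPolynomial.esymm (Fin n) ℂ 1 = es n (restS n hn) 1 + Zp n hn := by
  have h1 : i1 n hn ∉ restS n hn := i1_notin_restS n hn
  have h0 : i0 n hn ∉ insert (i1 n hn) (restS n hn) := by
    simp only [Finset.mem_insert]
    rintro (h | h)
    · exact i0_ne_i1 n hn h
    · exact i0_notin_restS n hn h
  rw [esymm_eq_es, univ_eq n hn, es_insert n h0 0, es_insert n h1 0, Zp]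
  simp only [es_zero]
  ring

lemma esymm_rec (k : ℕ) :
    MvPolynomial.esymm (Fin n) ℂ (k+2)
      = es n (restS n hn) (k+2) + Zp n hn * es n (restS n hn) (k+1)
        + Qp n hn * es n (restS n hn) k := by
  have h1 : i1 n hn ∉ restS n hn := i1_notin_restS n hn
  have h0 : i0 n hn ∉ insert (i1 n hn) (restS n hn) := by
    simp only [Finset.mem_insert]
    rintro (h | h)
    · exact i0_ne_i1 n hn h
    · exact i0_notin_restS n hn h
  rw [esymm_eq_es, univ_eq n hn, es_insert n h0 (k+1), es_insert n h1 (k+1),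
    es_insert n h1 k, Zp, Qp]
  ring

def MM : Submodule (symmetricSubalgebra (Fin n) ℂ) (MvPolynomial (Fin n) ℂ) :=
  Submodule.span (symmetricSubalgebra (Fin n) ℂ)
    (Set.range fun pq : ℕ × ℕ => FpiN n hn pq.1 pq.2)

lemma smul_coe (a : symmetricSubalgebra (Fin n) ℂ) (x : MvPolynomial (Fin n) ℂ) :
    a • x = (a : MvPolynomial (Fin n) ℂ) * x := rfl

lemma csmul_mem_MM {x : MvPolynomial (Fin n) ℂ} (hx : x ∈ MM n hn) (c : ℂ) :
    c • x ∈ MM n hn := by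
  have h : c • x = (⟨MvPolynomial.C c,
      (symmetricSubalgebra (Fin n) ℂ).algebraMap_mem c⟩ :
      symmetricSubalgebra (Fin n) ℂ) • x := by
    rw [smul_coe, ← MvPolynomial.smul_eq_C_mul]
  rw [h]
  exact Submodule.smul_mem _ _ hx

lemma symm_mul_mem_MM {g x : MvPolynomial (Fin n) ℂ} (hg : g.IsSymmetric)
    (hx : x ∈ MM n hn) : g * x ∈ MM n hn := by
  have h : g * x = (⟨g, hg⟩ : symmetricSubalgebra (Fin n) ℂ) • x := rfl
  rw [h]
  exact Submodule.smul_mem _ _ hx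

lemma VF_le_MM {x : MvPolynomial (Fin n) ℂ} (hx : x ∈ VF n hn) : x ∈ MM n hn := by
  induction hx using Submodule.span_induction with
  | mem g hg => exact Submodule.subset_span hg
  | zero => exact Submodule.zero_mem _
  | add u v _ _ hu hv => exact Submodule.add_mem _ hu hv
  | smul c u _ hu => exact csmul_mem_MM n hn hu c

lemma es_mul_Vzw_mem (k : ℕ) : ∀ v ∈ Vzw n hn, es n (restS n hn) k * v ∈ MM n hn := by
  induction k using Nat.strong_induction_on with
  | _ k ih =>
    intro v hv
    match k with
    | 0 =>
      rw [es_zero, one_mul]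
      exact VF_le_MM n hn (Vzw_le_VF n hn hv)
    | 1 =>
      have h : es n (restS n hn) 1 * v
          = MvPolynomial.esymm (Fin n) ℂ 1 * v - Zp n hn * v := by
        rw [esymm_one_eq n hn]; ring
      rw [h]
      apply Submodule.sub_mem
      · exact symm_mul_mem_MM n hn (MvPolynomial.esymm_isSymmetric _ ℂ 1)
          (VF_le_MM n hn (Vzw_le_VF n hn hv))
      · exact VF_le_MM n hn (Vzw_le_VF n hn (Vzw_mul n hn (Z_mem_Vzw n hn) hv))
    | (k+2) =>
      have h : es n (restS n hn) (k+2) * v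
          = MvPolynomial.esymm (Fin n) ℂ (k+2) * v
            - es n (restS n hn) (k+1) * (Zp n hn * v)
            - es n (restS n hn) k * (Qp n hn * v) := by
        rw [esymm_rec n hn]; ring
      rw [h]
      apply Submodule.sub_mem
      apply Submodule.sub_mem
      · exact symm_mul_mem_MM n hn (MvPolynomial.esymm_isSymmetric _ ℂ _)
          (VF_le_MM n hn (Vzw_le_VF n hn hv))
      · exact ih (k+1) (by omega) _ (Vzw_mul n hn (Z_mem_Vzw n hn) hv)
      · exact ih k (by omega) _ (Vzw_mul n hn (Q_mem_Vzw n hn) hv)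

lemma es_mul_mem_MM (k : ℕ) {x : MvPolynomial (Fin n) ℂ} (hx : x ∈ MM n hn) :
    es n (restS n hn) k * x ∈ MM n hn := by
  induction hx using Submodule.span_induction with
  | mem g hg =>
    obtain ⟨⟨p, i⟩, rfl⟩ := hg
    exact es_mul_Vzw_mem n hn k _ (FpiN_mem_Vzw n hn p i)
  | zero => rw [mul_zero]; exact Submodule.zero_mem _
  | add u v _ _ hu hv => rw [mul_add]; exact Submodule.add_mem _ hu hv
  | smul a u _ hu =>
    rw [smul_coe, show es n (restS n hn) k * ((a : MvPolynomial (Fin n) ℂ) * u)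
      = (a : MvPolynomial (Fin n) ℂ) * (es n (restS n hn) k * u) by ring, ← smul_coe]
    exact Submodule.smul_mem _ _ hu

lemma Psym_mul_mem_MM {r : MvPolynomial (Fin n) ℂ}
    (hr : r ∈ Algebra.adjoin ℂ (Set.range fun i : Fin (n-2) =>
      rename (emb n hn) (MvPolynomial.esymm (Fin (n-2)) ℂ ((i : ℕ)+1))))
    {x : MvPolynomial (Fin n) ℂ} (hx : x ∈ MM n hn) : r * x ∈ MM n hn := by
  induction hr using Algebra.adjoin_induction generalizing x with
  | mem g hg =>
    obtain ⟨i, rfl⟩ := hg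
    simp only []
    rw [rename_esymm_eq_es]
    exact es_mul_mem_MM n hn _ hx
  | algebraMap c =>
    rw [MvPolynomial.algebraMap_eq, ← MvPolynomial.smul_eq_C_mul]
    exact csmul_mem_MM n hn hx c
  | add r s _ _ ihr ihs => rw [add_mul]; exact Submodule.add_mem _ (ihr hx) (ihs hx)
  | mul r s _ _ ihr ihs => rw [mul_assoc]; exact ihr (ihs hx)

def eqv : (Fin 2 ⊕ Fin (n-2)) ≃ Fin n := finSumFinEquiv.trans (finCongr (by omega))

lemma eqv_inl_val (a : Fin 2) : ((eqv n hn (Sum.inl a)) : ℕ) = (a : ℕ) := by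
  simp [eqv]

lemma eqv_inr_val (b : Fin (n-2)) : ((eqv n hn (Sum.inr b)) : ℕ) = 2 + (b : ℕ) := by
  simp [eqv]

lemma eqv_inl0 : eqv n hn (Sum.inl 0) = i0 n hn := by
  apply Fin.ext; rw [eqv_inl_val]; rfl

lemma eqv_inl1 : eqv n hn (Sum.inl 1) = i1 n hn := by
  apply Fin.ext; rw [eqv_inl_val]; rfl

lemma eqv_inr (b : Fin (n-2)) : eqv n hn (Sum.inr b) = emb n hn b := by
  apply Fin.ext; rw [eqv_inr_val]; rfl

def TT : MvPolynomial (Fin n) ℂ ≃ₐ[ℂ] MvPolynomial (Fin 2) (MvPolynomial (Fin (n-2)) ℂ) :=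
  (renameEquiv ℂ (eqv n hn).symm).trans (sumAlgEquiv ℂ (Fin 2) (Fin (n-2)))

lemma TT_X_inl (a : Fin 2) : TT n hn (X (eqv n hn (Sum.inl a))) = X a := by
  simp [TT, sumToIter_Xl]

lemma TT_X_inr (b : Fin (n-2)) :
    TT n hn (X (eqv n hn (Sum.inr b))) = MvPolynomial.C (X b) := by
  simp [TT, sumToIter_Xr]

lemma TT_C (c : ℂ) : TT n hn (MvPolynomial.C c) = MvPolynomial.C (MvPolynomial.C c) := by
  simp [TT, sumToIter_C]

lemma TT_rename_emb (c : MvPolynomial (Fin (n-2)) ℂ) :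
    TT n hn (rename (emb n hn) c) = MvPolynomial.C c := by
  have h1 : (rename (emb n hn) c : MvPolynomial (Fin n) ℂ)
      = rename (eqv n hn) (rename Sum.inr c) := by
    rw [rename_rename]
    have : ((eqv n hn) ∘ Sum.inr : Fin (n-2) → Fin n) = ⇑(emb n hn) := by
      funext b; exact eqv_inr n hn b
    rw [this]
  rw [h1, TT, AlgEquiv.trans_apply, renameEquiv_apply, rename_rename, Equiv.symm_comp_self,
    rename_id]
  have h3 := AlgHom.congr_fun (sumAlgEquiv_comp_rename_inr ℂ (Fin 2) (Fin (n-2))) c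
  simpa using h3

def sigTau (τ : Equiv.Perm (Fin (n-2))) : Equiv.Perm (Fin n) :=
  ((eqv n hn).symm.trans ((Equiv.sumCongr (Equiv.refl (Fin 2)) τ).trans (eqv n hn)))

lemma sigTau_apply_inl (τ : Equiv.Perm (Fin (n-2))) (a : Fin 2) :
    sigTau n hn τ (eqv n hn (Sum.inl a)) = eqv n hn (Sum.inl a) := by
  simp [sigTau]

lemma sigTau_apply_inr (τ : Equiv.Perm (Fin (n-2))) (b : Fin (n-2)) :
    sigTau n hn τ (eqv n hn (Sum.inr b)) = eqv n hn (Sum.inr (τ b)) := by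
  simp [sigTau]

lemma sigTau_spec (τ : Equiv.Perm (Fin (n-2))) (i : Fin n) :
    ((sigTau n hn τ i : Fin n) : ℕ) < 2 ↔ (i : ℕ) < 2 := by
  obtain ⟨s, rfl⟩ : ∃ s, eqv n hn s = i := ⟨(eqv n hn).symm i, (eqv n hn).apply_symm_apply i⟩
  cases s with
  | inl a =>
    rw [sigTau_apply_inl]
  | inr b =>
    rw [sigTau_apply_inr, eqv_inr_val, eqv_inr_val]
    omega

def sigSw : Equiv.Perm (Fin n) :=
  ((eqv n hn).symm.trans
    ((Equiv.sumCongr (Equiv.swap (0:Fin 2) 1) (Equiv.refl (Fin (n-2)))).trans (eqv n hn)))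

lemma sigSw_apply_inl (a : Fin 2) :
    sigSw n hn (eqv n hn (Sum.inl a)) = eqv n hn (Sum.inl (Equiv.swap (0:Fin 2) 1 a)) := by
  simp only [sigSw, Equiv.trans_apply, Equiv.symm_apply_apply, Equiv.sumCongr_apply]
  rfl

lemma sigSw_apply_inr (b : Fin (n-2)) :
    sigSw n hn (eqv n hn (Sum.inr b)) = eqv n hn (Sum.inr b) := by
  simp only [sigSw, Equiv.trans_apply, Equiv.symm_apply_apply, Equiv.sumCongr_apply]
  rfl

lemma sigSw_spec (i : Fin n) : ((sigSw n hn i : Fin n) : ℕ) < 2 ↔ (i : ℕ) < 2 := by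
  obtain ⟨s, rfl⟩ : ∃ s, eqv n hn s = i := ⟨(eqv n hn).symm i, (eqv n hn).apply_symm_apply i⟩
  cases s with
  | inl a =>
    rw [sigSw_apply_inl, eqv_inl_val, eqv_inl_val]
    exact ⟨fun _ => a.isLt, fun _ => (Equiv.swap (0:Fin 2) 1 a).isLt⟩
  | inr b =>
    rw [sigSw_apply_inr]

lemma TT_rename_sigTau (τ : Equiv.Perm (Fin (n-2))) (g : MvPolynomial (Fin n) ℂ) :
    TT n hn (rename (sigTau n hn τ) g)
      = MvPolynomial.map
          (↑(rename τ : MvPolynomial (Fin (n-2)) ℂ →ₐ[ℂ] MvPolynomial (Fin (n-2)) ℂ) : _ →+* _)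
          (TT n hn g) := by
  induction g using MvPolynomial.induction_on with
  | C c => rw [rename_C, TT_C, MvPolynomial.map_C]; simp
  | add p q hp hq => simp only [map_add, hp, hq]
  | mul_X p j ih =>
    obtain ⟨s, rfl⟩ : ∃ s, eqv n hn s = j := ⟨(eqv n hn).symm j, (eqv n hn).apply_symm_apply j⟩
    have hx : TT n hn (rename (sigTau n hn τ) (X (eqv n hn s)))
        = MvPolynomial.map
            (↑(rename τ : MvPolynomial (Fin (n-2)) ℂ →ₐ[ℂ] MvPolynomial (Fin (n-2)) ℂ) : _ →+* _)
            (TT n hn (X (eqv n hn s))) := by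
      cases s with
      | inl a =>
        rw [rename_X, sigTau_apply_inl, TT_X_inl, MvPolynomial.map_X]
      | inr b =>
        rw [rename_X, sigTau_apply_inr, TT_X_inr, TT_X_inr, MvPolynomial.map_C]
        simp
    rw [map_mul, map_mul, map_mul, map_mul, ih, hx]

lemma TT_rename_sigSw (g : MvPolynomial (Fin n) ℂ) :
    TT n hn (rename (sigSw n hn) g)
      = rename (Equiv.swap (0:Fin 2) 1) (TT n hn g) := by
  induction g using MvPolynomial.induction_on with
  | C c => rw [rename_C, TT_C, rename_C]
  | add p q hp hq => simp only [map_add, hp, hq]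
  | mul_X p j ih =>
    obtain ⟨s, rfl⟩ : ∃ s, eqv n hn s = j := ⟨(eqv n hn).symm j, (eqv n hn).apply_symm_apply j⟩
    have hx : TT n hn (rename (sigSw n hn) (X (eqv n hn s)))
        = rename (Equiv.swap (0:Fin 2) 1) (TT n hn (X (eqv n hn s))) := by
      cases s with
      | inl a => rw [rename_X, sigSw_apply_inl, TT_X_inl, TT_X_inl, rename_X]
      | inr b => rw [rename_X, sigSw_apply_inr, TT_X_inr, rename_C]
    rw [map_mul, map_mul, map_mul, map_mul, ih, hx]

lemma rfun_mem_Vzw (k : ℕ) : X (i0 n hn) ^ k + X (i1 n hn) ^ k ∈ Vzw n hn := by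
  induction k using Nat.strong_induction_on with
  | _ k ih =>
    match k with
    | 0 =>
      have h : X (i0 n hn) ^ 0 + X (i1 n hn) ^ 0 = (2:ℂ) • (1 : MvPolynomial (Fin n) ℂ) := by
        rw [MvPolynomial.smul_eq_C_mul, map_ofNat]
        norm_num
      rw [h]; exact Submodule.smul_mem _ _ (one_mem_Vzw n hn)
    | 1 =>
      have h : X (i0 n hn) ^ 1 + X (i1 n hn) ^ 1 = Zp n hn := by rw [Zp]; ring
      rw [h]; exact Z_mem_Vzw n hn
    | (k+2) =>
      have h : X (i0 n hn) ^ (k+2) + X (i1 n hn) ^ (k+2)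
          = Zp n hn * (X (i0 n hn) ^ (k+1) + X (i1 n hn) ^ (k+1))
            - Qp n hn * (X (i0 n hn) ^ k + X (i1 n hn) ^ k) := by
        rw [Zp, Qp]; ring
      rw [h]
      exact Submodule.sub_mem _
        (Vzw_mul n hn (Z_mem_Vzw n hn) (ih (k+1) (by omega)))
        (Vzw_mul n hn (Q_mem_Vzw n hn) (ih k (by omega)))

lemma m_mem_Vzw (a b : ℕ) :
    X (i0 n hn) ^ a * X (i1 n hn) ^ b + X (i0 n hn) ^ b * X (i1 n hn) ^ a ∈ Vzw n hn := by
  rcases le_total b a with hba | hab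
  · obtain ⟨c, rfl⟩ : ∃ c, a = b + c := ⟨a - b, by omega⟩
    have h : X (i0 n hn) ^ (b+c) * X (i1 n hn) ^ b + X (i0 n hn) ^ b * X (i1 n hn) ^ (b+c)
        = Qp n hn ^ b * (X (i0 n hn) ^ c + X (i1 n hn) ^ c) := by
      rw [Qp]; ring
    rw [h]
    exact Vzw_mul n hn (pow_mem_Vzw n hn (Q_mem_Vzw n hn) b) (rfun_mem_Vzw n hn c)
  · obtain ⟨c, rfl⟩ : ∃ c, b = a + c := ⟨b - a, by omega⟩
    have h : X (i0 n hn) ^ a * X (i1 n hn) ^ (a+c) + X (i0 n hn) ^ (a+c) * X (i1 n hn) ^ a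
        = Qp n hn ^ a * (X (i0 n hn) ^ c + X (i1 n hn) ^ c) := by
      rw [Qp]; ring
    rw [h]
    exact Vzw_mul n hn (pow_mem_Vzw n hn (Q_mem_Vzw n hn) a) (rfun_mem_Vzw n hn c)

lemma rename_FpiN (σ : Equiv.Perm (Fin n)) (hσ : ∀ i : Fin n, ((σ i : ℕ) < 2 ↔ (i : ℕ) < 2))
    (p i : ℕ) : rename σ (FpiN n hn p i) = FpiN n hn p i := by
  have h0 : ((σ (i0 n hn) : Fin n) : ℕ) < 2 := (hσ _).2 (by simp [i0])
  have h1 : ((σ (i1 n hn) : Fin n) : ℕ) < 2 := (hσ _).2 (by simp [i1])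
  have hne : σ (i0 n hn) ≠ σ (i1 n hn) := fun h => i0_ne_i1 n hn (σ.injective h)
  have hvne : ((σ (i0 n hn) : Fin n) : ℕ) ≠ ((σ (i1 n hn) : Fin n) : ℕ) :=
    fun h => hne (Fin.ext h)
  have hi0v : ((i0 n hn : Fin n) : ℕ) = 0 := rfl
  have hi1v : ((i1 n hn : Fin n) : ℕ) = 1 := rfl
  have hren : rename σ (FpiN n hn p i) =
      (∑ k ∈ Finset.range (p+1), X (σ (i0 n hn)) ^ k * X (σ (i1 n hn)) ^ (p - k)) *
        (X (σ (i0 n hn)) - X (σ (i1 n hn))) ^ (2*i) := by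
    rw [FpiN_eq]
    simp only [hP, Wp, map_mul, map_pow, map_sub, map_sum, rename_X]
  have hv2 : ((σ (i0 n hn) : Fin n) : ℕ) = 0 ∨ ((σ (i0 n hn) : Fin n) : ℕ) = 1 := by omega
  rcases hv2 with hv0 | hv0
  · have e0 : σ (i0 n hn) = i0 n hn := Fin.ext (by rw [hi0v, hv0])
    have e1 : σ (i1 n hn) = i1 n hn := Fin.ext (by rw [hi1v]; omega)
    rw [hren, e0, e1, FpiN_eq]
    simp only [hP, Wp]
  · have e0 : σ (i0 n hn) = i1 n hn := Fin.ext (by rw [hi1v, hv0])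
    have e1 : σ (i1 n hn) = i0 n hn := Fin.ext (by rw [hi0v]; omega)
    rw [hren, e0, e1, FpiN_eq]
    simp only [hP, Wp]
    congr 1
    · conv_rhs => rw [← Finset.sum_range_reflect]
      apply Finset.sum_congr rfl
      intro j hj
      rw [Finset.mem_range] at hj
      have h2 : p + 1 - 1 - j = p - j := by omega
      have h3 : p - (p - j) = j := by omega
      rw [h2, h3, mul_comm]
    · rw [← neg_sub (X (i0 n hn)) (X (i1 n hn)), (even_two_mul i).neg_pow]

lemma monomial_fin2 (d : Fin 2 →₀ ℕ) (c : MvPolynomial (Fin (n-2)) ℂ) :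
    monomial d c = MvPolynomial.C c * X 0 ^ (d 0) * X 1 ^ (d 1) := by
  rw [monomial_eq, Finsupp.prod_fintype _ _ (fun i => pow_zero _), Fin.prod_univ_two, ← mul_assoc]

lemma TT_symm_piece (d : Fin 2 →₀ ℕ) (c : MvPolynomial (Fin (n-2)) ℂ) :
    TT n hn (rename (emb n hn) c * X (i0 n hn) ^ (d 0) * X (i1 n hn) ^ (d 1))
      = monomial d c := by
  rw [map_mul, map_mul, map_pow, map_pow, TT_rename_emb, ← eqv_inl0, ← eqv_inl1, TT_X_inl,
    TT_X_inl, monomial_fin2]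

lemma forward_mem_MM (f : MvPolynomial (Fin n) ℂ)
    (hf : ∀ σ : Equiv.Perm (Fin n),
      (∀ i : Fin n, ((σ i : ℕ) < 2 ↔ (i : ℕ) < 2)) → rename σ f = f) :
    f ∈ MM n hn := by
  classical
  set F := TT n hn f with hF
  have hcsymm : ∀ d : Fin 2 →₀ ℕ, (MvPolynomial.coeff d F).IsSymmetric := by
    intro d τ
    have h1 := hf (sigTau n hn τ) (sigTau_spec n hn τ)
    have h2 : MvPolynomial.map
        (↑(rename τ : MvPolynomial (Fin (n-2)) ℂ →ₐ[ℂ] MvPolynomial (Fin (n-2)) ℂ) : _ →+* _)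
        F = F := by
      rw [hF, ← TT_rename_sigTau, h1]
    conv_rhs => rw [← h2]
    rw [MvPolynomial.coeff_map]
    rfl
  have hswap : ∀ d : Fin 2 →₀ ℕ,
      MvPolynomial.coeff (Finsupp.mapDomain (Equiv.swap (0:Fin 2) 1) d) F
        = MvPolynomial.coeff d F := by
    intro d
    have h1 := hf (sigSw n hn) (sigSw_spec n hn)
    have h2 : rename (Equiv.swap (0:Fin 2) 1) F = F := by
      rw [hF, ← TT_rename_sigSw, h1]
    conv_lhs => rw [← h2]
    exact MvPolynomial.coeff_rename_mapDomain _ (Equiv.injective _) F d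
  have hrec : f = ∑ d ∈ F.support,
      rename (emb n hn) (MvPolynomial.coeff d F) * X (i0 n hn) ^ (d 0) * X (i1 n hn) ^ (d 1) := by
    apply (TT n hn).injective
    rw [map_sum]
    rw [Finset.sum_congr rfl (fun d _ => TT_symm_piece n hn d (MvPolynomial.coeff d F)),
      support_sum_monomial_coeff]
  have hmd0 : ∀ d : Fin 2 →₀ ℕ, (Finsupp.mapDomain (Equiv.swap (0:Fin 2) 1) d) 0 = d 1 := by
    intro d
    have h := Finsupp.mapDomain_apply (Equiv.swap (0:Fin 2) 1).injective d 1
    rw [Equiv.swap_apply_right] at h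
    exact h
  have hmd1 : ∀ d : Fin 2 →₀ ℕ, (Finsupp.mapDomain (Equiv.swap (0:Fin 2) 1) d) 1 = d 0 := by
    intro d
    have h := Finsupp.mapDomain_apply (Equiv.swap (0:Fin 2) 1).injective d 0
    rw [Equiv.swap_apply_left] at h
    exact h
  have hmem_supp : ∀ d ∈ F.support, Finsupp.mapDomain (Equiv.swap (0:Fin 2) 1) d ∈ F.support := by
    intro d hd
    rw [MvPolynomial.mem_support_iff] at hd ⊢
    rw [hswap d]
    exact hd
  have hinv : ∀ d : Fin 2 →₀ ℕ,
      Finsupp.mapDomain (Equiv.swap (0:Fin 2) 1)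
        (Finsupp.mapDomain (Equiv.swap (0:Fin 2) 1) d) = d := by
    intro d
    rw [← Finsupp.mapDomain_comp]
    have h : (⇑(Equiv.swap (0:Fin 2) 1) ∘ ⇑(Equiv.swap (0:Fin 2) 1)) = id := by
      funext x; simp [Equiv.swap_apply_self]
    rw [h, Finsupp.mapDomain_id]
  have hsum2 : (∑ d ∈ F.support,
        rename (emb n hn) (MvPolynomial.coeff d F) * X (i0 n hn) ^ (d 0) * X (i1 n hn) ^ (d 1))
      = ∑ d ∈ F.support,
        rename (emb n hn) (MvPolynomial.coeff d F) * X (i0 n hn) ^ (d 1) * X (i1 n hn) ^ (d 0) := by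
    apply Finset.sum_nbij' (fun d => Finsupp.mapDomain (Equiv.swap (0:Fin 2) 1) d)
      (fun d => Finsupp.mapDomain (Equiv.swap (0:Fin 2) 1) d)
      hmem_supp hmem_supp (fun d _ => hinv d) (fun d _ => hinv d)
    intro d _
    rw [hswap d, hmd0, hmd1]
  have hkey : f = (2⁻¹:ℂ) • (∑ d ∈ F.support,
      rename (emb n hn) (MvPolynomial.coeff d F)
        * (X (i0 n hn) ^ (d 0) * X (i1 n hn) ^ (d 1)
          + X (i0 n hn) ^ (d 1) * X (i1 n hn) ^ (d 0))) := by
    have hexp : (∑ d ∈ F.support,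
        rename (emb n hn) (MvPolynomial.coeff d F)
          * (X (i0 n hn) ^ (d 0) * X (i1 n hn) ^ (d 1)
            + X (i0 n hn) ^ (d 1) * X (i1 n hn) ^ (d 0)))
        = (∑ d ∈ F.support,
            rename (emb n hn) (MvPolynomial.coeff d F) * X (i0 n hn) ^ (d 0) * X (i1 n hn) ^ (d 1))
          + ∑ d ∈ F.support,
            rename (emb n hn) (MvPolynomial.coeff d F) * X (i0 n hn) ^ (d 1) * X (i1 n hn) ^ (d 0) := by
      rw [← Finset.sum_add_distrib]
      apply Finset.sum_congr rfl
      intro d _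
      ring
    rw [hexp, ← hsum2, ← hrec, ← two_smul ℂ f, smul_smul]
    norm_num
  rw [hkey]
  apply csmul_mem_MM n hn
  apply Submodule.sum_mem
  intro d _
  have hr : rename (emb n hn) (MvPolynomial.coeff d F)
      ∈ Algebra.adjoin ℂ (Set.range fun i : Fin (n-2) =>
          rename (emb n hn) (MvPolynomial.esymm (Fin (n-2)) ℂ ((i : ℕ)+1))) := by
    obtain ⟨q, hq⟩ := esymmAlgHom_fin_surjective (R := ℂ) (le_refl (n-2))
      ⟨MvPolynomial.coeff d F, hcsymm d⟩
    have hval := congrArg Subtype.val hq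
    rw [esymmAlgHom_apply] at hval
    have hval' : (aeval fun i : Fin (n-2) => MvPolynomial.esymm (Fin (n-2)) ℂ ((i : ℕ)+1)) q
        = MvPolynomial.coeff d F := hval
    have heq : rename (emb n hn) (MvPolynomial.coeff d F)
        = aeval (fun i : Fin (n-2) =>
            rename (emb n hn) (MvPolynomial.esymm (Fin (n-2)) ℂ ((i : ℕ)+1))) q := by
      rw [← hval', comp_aeval_apply]
    rw [heq, Algebra.adjoin_range_eq_range_aeval]
    exact ⟨q, rfl⟩
  exact Psym_mul_mem_MM n hn hr
    (VF_le_MM n hn (Vzw_le_VF n hn (m_mem_Vzw n hn (d 0) (d 1))))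

end FpiAux

open FpiAux in
/-- Every polynomial invariant under `𝔖_2 × 𝔖_{n-2}` is an `S^{𝔖_n}`-linear combination
of the polynomials `F_{p,i}`, i.e. `S^{𝔖_2 × 𝔖_{n-2}} = ∑_{p,i ≥ 0} S^{𝔖_n} · F_{p,i}`. -/
theorem invariants_S2_Sn2_spanned_by_Fpi (n : ℕ) (hn : 2 ≤ n)
    (f : MvPolynomial (Fin n) ℂ) :
    (∀ σ : Equiv.Perm (Fin n),
        (∀ i : Fin n, ((σ i : ℕ) < 2 ↔ (i : ℕ) < 2)) → rename σ f = f) ↔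
      ∃ (N : ℕ) (c : ℕ → ℕ → MvPolynomial (Fin n) ℂ),
        (∀ p i, ∀ σ : Equiv.Perm (Fin n), rename σ (c p i) = c p i) ∧
        f = ∑ p ∈ Finset.range N, ∑ i ∈ Finset.range N, c p i * FpiN n hn p i := by
  constructor
  · intro hf
    have hmem := forward_mem_MM n hn f hf
    rw [MM, Finsupp.mem_span_range_iff_exists_finsupp] at hmem
    obtain ⟨cc, hcc⟩ := hmem
    set N := 1 + cc.support.sup (fun pq => max pq.1 pq.2) with hN
    refine ⟨N, fun p i => ((cc (p,i) : symmetricSubalgebra (Fin n) ℂ) : MvPolynomial (Fin n) ℂ),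
      ?_, ?_⟩
    · intro p i σ
      exact (cc (p,i)).2 σ
    · rw [← hcc, Finsupp.sum, ← Finset.sum_product']
      have hstep : ∑ pq ∈ cc.support,
          (cc pq • FpiN n hn pq.1 pq.2 : MvPolynomial (Fin n) ℂ)
          = ∑ pq ∈ cc.support,
            ((cc pq : MvPolynomial (Fin n) ℂ) * FpiN n hn pq.1 pq.2) := by
        apply Finset.sum_congr rfl
        intro pq _
        rfl
      rw [hstep]
      apply Finset.sum_subset
      · intro pq hpq
        have hle : max pq.1 pq.2 ≤ cc.support.sup (fun pq : ℕ × ℕ => max pq.1 pq.2) :=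
          Finset.le_sup (f := fun pq : ℕ × ℕ => max pq.1 pq.2) hpq
        rw [Finset.mem_product, Finset.mem_range, Finset.mem_range]
        omega
      · intro pq _ hpq
        rw [Finsupp.notMem_support_iff.mp hpq]
        simp
  · rintro ⟨N, c, hc, rfl⟩
    intro σ hσ
    rw [map_sum]
    refine Finset.sum_congr rfl fun p _ => ?_
    rw [map_sum]
    refine Finset.sum_congr rfl fun i _ => ?_
    rw [map_mul, hc p i σ, rename_FpiN n hn σ hσ p i]
end
end
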